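/- Let D be a division ring and let X^b, X^c, Y^b, Y^c ∈ D (playing the roles of X^{i,b}, X^{i,c}, X^{i-1,b}, X^{i-1,c}). Define Γ_{bc} = (X^b - X^c)⁻¹(1 - X^c) - Y^b·(Y^b - Y^c)⁻¹·(1 - Y^c), and define Γ_{cb} by interchanging b and c. Then Γ_{bc} + Γ_{cb} = 0, provided X^b ≠ X^c and Y^b ≠ Y^c. -/

import Mathlib

/-! Both halves of `Γ_bc + Γ_cb` equal `1` separately. For the `X`-half this is immediate from
`(Xc - Xb)⁻¹ = -(Xb - Xc)⁻¹`. For the `Y`-half, where the inverse sits between two factors, it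
rests on the identity `a (a - b)⁻¹ b = b (a - b)⁻¹ a`, obtained by writing `a = b + (a - b)` on
either side. -/

section DivisionRing

variable {D : Type*} [DivisionRing D]

theorem mul_inv_sub_mul_comm (a b : D) : a * (a - b)⁻¹ * b = b * (a - b)⁻¹ * a := by
  rcases eq_or_ne a b with rfl | hab
  · rfl
  have hd : (a - b) * (a - b)⁻¹ = 1 := mul_inv_cancel₀ (sub_ne_zero.mpr hab)
  calc a * (a - b)⁻¹ * b = (b + (a - b)) * (a - b)⁻¹ * b := by rw [add_sub_cancel]
    _ = b * (a - b)⁻¹ * b + (a - b) * (a - b)⁻¹ * b := by noncomm_ring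
    _ = b * (a - b)⁻¹ * b + b * ((a - b)⁻¹ * (a - b)) := by
      rw [hd, inv_mul_cancel₀ (sub_ne_zero.mpr hab), one_mul, mul_one]
    _ = b * (a - b)⁻¹ * (b + (a - b)) := by noncomm_ring
    _ = b * (a - b)⁻¹ * a := by rw [add_sub_cancel]

theorem inv_sub_mul_one_sub_add_swap {a b : D} (hab : a ≠ b) :
    (a - b)⁻¹ * (1 - b) + (b - a)⁻¹ * (1 - a) = 1 := by
  rw [← neg_sub a b, inv_neg, neg_mul, ← sub_eq_add_neg, ← mul_sub, sub_sub_sub_cancel_left]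
  exact inv_mul_cancel₀ (sub_ne_zero.mpr hab)

theorem mul_inv_sub_mul_one_sub_add_swap {a b : D} (hab : a ≠ b) :
    a * (a - b)⁻¹ * (1 - b) + b * (b - a)⁻¹ * (1 - a) = 1 := by
  have hd : (a - b) * (a - b)⁻¹ = 1 := mul_inv_cancel₀ (sub_ne_zero.mpr hab)
  calc a * (a - b)⁻¹ * (1 - b) + b * (b - a)⁻¹ * (1 - a)
      = (a - b) * (a - b)⁻¹ + (b * (a - b)⁻¹ * a - a * (a - b)⁻¹ * b) := by
        rw [← neg_sub a b, inv_neg]; noncomm_ring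
    _ = 1 := by rw [hd, mul_inv_sub_mul_comm, sub_self, add_zero]

end DivisionRing

theorem stmt_5 {D : Type*} [DivisionRing D] (Xb Xc Yb Yc : D)
    (hX : Xb ≠ Xc) (hY : Yb ≠ Yc) :
    ((Xb - Xc)⁻¹ * (1 - Xc) - Yb * (Yb - Yc)⁻¹ * (1 - Yc))
      + ((Xc - Xb)⁻¹ * (1 - Xb) - Yc * (Yc - Yb)⁻¹ * (1 - Yb)) = 0 := by
  calc ((Xb - Xc)⁻¹ * (1 - Xc) - Yb * (Yb - Yc)⁻¹ * (1 - Yc))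
        + ((Xc - Xb)⁻¹ * (1 - Xb) - Yc * (Yc - Yb)⁻¹ * (1 - Yb))
      = ((Xb - Xc)⁻¹ * (1 - Xc) + (Xc - Xb)⁻¹ * (1 - Xb))
        - (Yb * (Yb - Yc)⁻¹ * (1 - Yc) + Yc * (Yc - Yb)⁻¹ * (1 - Yb)) := by abel
    _ = 0 := by
      rw [inv_sub_mul_one_sub_add_swap hX, mul_inv_sub_mul_one_sub_add_swap hY, sub_self]
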